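/- Let q be a prime power. Let U ≤ GL_4(F_q) be the group of upper unitriangular matrices with (1,2)-entry zero, and let V ≤ GL_4(F_q) be the group of upper unitriangular matrices with (2,3)-entry zero. Then U and V have the same order q^5, but the number of conjugacy classes of U is strictly less than the number of conjugacy classes of V; in particular k(U) ≠ k(V). -/
import Mathlib


open Matrix

/-- The coordinate subspace of `K^n` spanned by the first `m` standard basis vectors. -/
def coordSub (K : Type*) [Field K] (n m : ℕ) : Submodule K (Fin n → K) where
  carrier := {v | ∀ j : Fin n, m ≤ (j : ℕ) → v j = 0}
  add_mem' := by intro a b ha hb j hj; simp [ha j hj, hb j hj]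
  zero_mem' := by intro j hj; rfl
  smul_mem' := by intro c v hv j hj; simp [hv j hj]

lemma coordSub_mono (K : Type*) [Field K] (n : ℕ) {m m' : ℕ} (h : m ≤ m') :
    coordSub K n m ≤ coordSub K n m' := fun v hv j hj => hv j (le_trans h hj)

lemma coordSub_zero (K : Type*) [Field K] (n : ℕ) {v : Fin n → K}
    (hv : v ∈ coordSub K n 0) : v = 0 := funext fun j => hv j (Nat.zero_le _)

/-- The parabolic subgroup of `GL n K` stabilizing the flag of coordinate subspaces
of dimensions `d 1 ≤ d 2 ≤ ... ≤ d t`. -/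
def flagP (K : Type*) [Field K] (n t : ℕ) (d : ℕ → ℕ) : Subgroup (GL (Fin n) K) where
  carrier := {g | ∀ i, 1 ≤ i → i ≤ t →
    Submodule.map (Matrix.mulVecLin (g : Matrix (Fin n) (Fin n) K)) (coordSub K n (d i))
      = coordSub K n (d i)}
  one_mem' := by
    intro i h1 h2
    simp
  mul_mem' := by
    intro a b ha hb i h1 h2
    have hab : ((↑(a * b) : Matrix (Fin n) (Fin n) K))
        = (↑a : Matrix (Fin n) (Fin n) K) * (↑b : Matrix (Fin n) (Fin n) K) := rfl
    rw [Set.mem_setOf_eq] at *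
    rw [hab, Matrix.mulVecLin_mul, Submodule.map_comp, hb i h1 h2, ha i h1 h2]
  inv_mem' := by
    intro a ha i h1 h2
    rw [Set.mem_setOf_eq] at *
    conv_lhs => rw [← ha i h1 h2]
    rw [← Submodule.map_comp, ← Matrix.mulVecLin_mul, Units.inv_mul, Matrix.mulVecLin_one,
      Submodule.map_id]

section flagU

variable {K : Type*} [Field K] {n t : ℕ} {d : ℕ → ℕ}

private lemma flagU_carrier_stab (h0 : d 0 = 0) (hd : Monotone d) {a : GL (Fin n) K}
    (ha : ∀ i, 1 ≤ i → i ≤ t → ∀ v ∈ coordSub K n (d i),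
      ((a : Matrix (Fin n) (Fin n) K) - 1).mulVec v ∈ coordSub K n (d (i - 1)))
    {i : ℕ} (hi : i ≤ t) {w : Fin n → K} (hw : w ∈ coordSub K n (d i)) :
    (a : Matrix (Fin n) (Fin n) K).mulVec w ∈ coordSub K n (d i) := by
  rcases Nat.eq_zero_or_pos i with h | h
  · subst h
    rw [h0] at hw
    rw [coordSub_zero K n hw, Matrix.mulVec_zero]
    exact Submodule.zero_mem _
  · have key : (a : Matrix (Fin n) (Fin n) K).mulVec w
        = ((a : Matrix (Fin n) (Fin n) K) - 1).mulVec w + w := by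
      rw [Matrix.sub_mulVec, Matrix.one_mulVec, sub_add_cancel]
    rw [key]
    exact Submodule.add_mem _
      (coordSub_mono K n (hd (Nat.sub_le i 1)) (ha i h hi w hw)) hw

private lemma flagU_carrier_inv_stab (h0 : d 0 = 0) (hd : Monotone d) {a : GL (Fin n) K}
    (ha : ∀ i, 1 ≤ i → i ≤ t → ∀ v ∈ coordSub K n (d i),
      ((a : Matrix (Fin n) (Fin n) K) - 1).mulVec v ∈ coordSub K n (d (i - 1)))
    {i : ℕ} (hi : i ≤ t) {w : Fin n → K} (hw : w ∈ coordSub K n (d i)) :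
    ((a⁻¹ : GL (Fin n) K) : Matrix (Fin n) (Fin n) K).mulVec w ∈ coordSub K n (d i) := by
  set f := Matrix.mulVecLin (a : Matrix (Fin n) (Fin n) K) with hf
  have hinj : Function.Injective f := by
    have : Function.LeftInverse
        (Matrix.mulVecLin ((a⁻¹ : GL (Fin n) K) : Matrix (Fin n) (Fin n) K)) f := by
      intro v
      simp only [hf, Matrix.mulVecLin_apply, Matrix.mulVec_mulVec, Units.inv_mul,
        Matrix.one_mulVec]
    exact this.injective
  have hle : Submodule.map f (coordSub K n (d i)) ≤ coordSub K n (d i) := by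
    rintro y ⟨v, hv, rfl⟩
    exact flagU_carrier_stab h0 hd ha hi hv
  have heq : Submodule.map f (coordSub K n (d i)) = coordSub K n (d i) := by
    apply Submodule.eq_of_le_of_finrank_le hle
    rw [LinearEquiv.finrank_eq (Submodule.equivMapOfInjective f hinj (coordSub K n (d i)))]
  rw [← heq] at hw
  rcases hw with ⟨v, hv, rfl⟩
  have : ((a⁻¹ : GL (Fin n) K) : Matrix (Fin n) (Fin n) K).mulVec (f v) = v := by
    simp only [hf, Matrix.mulVecLin_apply, Matrix.mulVec_mulVec, Units.inv_mul,
      Matrix.one_mulVec]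
  rwa [this]

/-- The unipotent radical of the parabolic subgroup of `GL n K` stabilizing the flag of
coordinate subspaces of dimensions `d 1 ≤ ... ≤ d t`: all `u` with
`(u - 1) V i ⊆ V (i-1)` for each `i`. -/
def flagU (K : Type*) [Field K] (n t : ℕ) (d : ℕ → ℕ) (h0 : d 0 = 0) (hd : Monotone d) :
    Subgroup (GL (Fin n) K) where
  carrier := {g | ∀ i, 1 ≤ i → i ≤ t → ∀ v ∈ coordSub K n (d i),
    ((g : Matrix (Fin n) (Fin n) K) - 1).mulVec v ∈ coordSub K n (d (i - 1))}
  one_mem' := by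
    intro i h1 h2 v hv
    simp only [Units.val_one, sub_self, Matrix.zero_mulVec]
    exact Submodule.zero_mem _
  mul_mem' := by
    intro a b ha hb i h1 h2 v hv
    rw [Set.mem_setOf_eq] at ha hb
    have hab : ((↑(a * b) : Matrix (Fin n) (Fin n) K))
        = (↑a : Matrix (Fin n) (Fin n) K) * (↑b : Matrix (Fin n) (Fin n) K) := rfl
    have key : ((↑(a * b) : Matrix (Fin n) (Fin n) K) - 1).mulVec v
        = (↑a : Matrix (Fin n) (Fin n) K).mulVec
            (((↑b : Matrix (Fin n) (Fin n) K) - 1).mulVec v)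
          + ((↑a : Matrix (Fin n) (Fin n) K) - 1).mulVec v := by
      rw [hab, Matrix.mulVec_mulVec, ← Matrix.add_mulVec]
      congr 1
      noncomm_ring
    rw [key]
    refine Submodule.add_mem _ ?_ (ha i h1 h2 v hv)
    exact flagU_carrier_stab h0 hd ha (le_trans (Nat.sub_le i 1) h2) (hb i h1 h2 v hv)
  inv_mem' := by
    intro a ha i h1 h2 v hv
    rw [Set.mem_setOf_eq] at ha
    have hmul : ((a⁻¹ : GL (Fin n) K) : Matrix (Fin n) (Fin n) K)
        * ((a : Matrix (Fin n) (Fin n) K) - 1)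
        = 1 - ((a⁻¹ : GL (Fin n) K) : Matrix (Fin n) (Fin n) K) := by
      rw [mul_sub, Units.inv_mul, mul_one]
    have key : (((a⁻¹ : GL (Fin n) K) : Matrix (Fin n) (Fin n) K) - 1).mulVec v
        = -((a⁻¹ : GL (Fin n) K) : Matrix (Fin n) (Fin n) K).mulVec
            (((a : Matrix (Fin n) (Fin n) K) - 1).mulVec v) := by
      rw [Matrix.mulVec_mulVec, hmul, Matrix.sub_mulVec, Matrix.sub_mulVec,
        Matrix.one_mulVec, neg_sub]
    rw [key]
    exact Submodule.neg_mem _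
      (flagU_carrier_inv_stab h0 hd ha (le_trans (Nat.sub_le i 1) h2) (ha i h1 h2 v hv))

end flagU

section matCent

variable {K : Type*} [Field K] {n : ℕ}

private lemma matCent_key (x : Matrix (Fin n) (Fin n) K) (g : GL (Fin n) K) :
    (↑g : Matrix (Fin n) (Fin n) K) * x * (↑g⁻¹ : Matrix (Fin n) (Fin n) K) = x
      ↔ (↑g : Matrix (Fin n) (Fin n) K) * x = x * (↑g : Matrix (Fin n) (Fin n) K) := by
  constructor
  · intro h
    have h2 : (↑g : Matrix (Fin n) (Fin n) K) * x * (↑g⁻¹ : Matrix (Fin n) (Fin n) K)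
        * (↑g : Matrix (Fin n) (Fin n) K) = x * (↑g : Matrix (Fin n) (Fin n) K) := by rw [h]
    rwa [mul_assoc ((↑g : Matrix (Fin n) (Fin n) K) * x), Units.inv_mul, mul_one] at h2
  · intro h
    rw [h, mul_assoc, Units.mul_inv, mul_one]

/-- The centralizer in `GL n K` of a matrix `x`: all `g` with `g * x * g⁻¹ = x`. -/
def matCent (K : Type*) [Field K] (n : ℕ) (x : Matrix (Fin n) (Fin n) K) :
    Subgroup (GL (Fin n) K) where
  carrier := {g | (↑g : Matrix (Fin n) (Fin n) K) * x * (↑g⁻¹ : Matrix (Fin n) (Fin n) K) = x}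
  one_mem' := by
    simp
  mul_mem' := by
    intro a b ha hb
    simp only [Set.mem_setOf_eq, matCent_key] at ha hb ⊢
    have hab : ((↑(a * b) : Matrix (Fin n) (Fin n) K))
        = (↑a : Matrix (Fin n) (Fin n) K) * (↑b : Matrix (Fin n) (Fin n) K) := rfl
    rw [hab, mul_assoc, hb, ← mul_assoc, ha, mul_assoc]
  inv_mem' := by
    intro a ha
    simp only [Set.mem_setOf_eq, matCent_key] at ha ⊢
    calc (↑a⁻¹ : Matrix (Fin n) (Fin n) K) * x
        = ↑a⁻¹ * x * ((↑a : Matrix (Fin n) (Fin n) K) * ↑a⁻¹) := by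
          rw [Units.mul_inv, mul_one]
      _ = ↑a⁻¹ * (x * (↑a : Matrix (Fin n) (Fin n) K)) * ↑a⁻¹ := by
          simp only [mul_assoc]
      _ = ↑a⁻¹ * ((↑a : Matrix (Fin n) (Fin n) K) * x) * ↑a⁻¹ := by rw [← ha]
      _ = x * ↑a⁻¹ := by rw [← mul_assoc, Units.inv_mul, one_mul]

end matCent

/-- The Lie algebra of the unipotent radical: matrices mapping each flag subspace `V i`
into `V (i-1)`. -/
def uSet (K : Type*) [Field K] (n t : ℕ) (d : ℕ → ℕ) : Set (Matrix (Fin n) (Fin n) K) :=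
  {x | ∀ i, 1 ≤ i → i ≤ t → ∀ v ∈ coordSub K n (d i), x.mulVec v ∈ coordSub K n (d (i - 1))}

/-- A group is split unipotent over the field `K` if it has a finite normal series each of
whose successive quotients is isomorphic to the additive group `(K, +)`. -/
def IsSplitUnipotentOver (K : Type*) [Field K] (G : Type*) [Group G] : Prop :=
  ∃ (k : ℕ) (s : Fin (k + 1) → Subgroup G), s 0 = ⊥ ∧ s (Fin.last k) = ⊤ ∧
    ∀ i : Fin k, s i.castSucc ≤ s i.succ ∧
      ∃ _ : ((s i.castSucc).subgroupOf (s i.succ)).Normal,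
        Nonempty ((↥(s i.succ) ⧸ (s i.castSucc).subgroupOf (s i.succ)) ≃* Multiplicative K)

/-- The dimension sequence `0, 2, 3, 4` of the flag `0 ⊆ F^2 ⊆ F^3 ⊆ F^4`. -/
def dU234 : ℕ → ℕ := fun i => min (min (i + 1) (2 * i)) 4

lemma dU234_zero : dU234 0 = 0 := rfl

lemma dU234_mono : Monotone dU234 := by
  intro a b h
  simp only [dU234]
  omega

/-- The dimension sequence `0, 1, 3, 4` of the flag `0 ⊆ F^1 ⊆ F^3 ⊆ F^4`. -/
def dV134 : ℕ → ℕ := fun i => min (2 * i - 1) 4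

lemma dV134_zero : dV134 0 = 0 := rfl

lemma dV134_mono : Monotone dV134 := by
  intro a b h
  simp only [dV134]
  omega

universe u


/-! ### Auxiliary: explicit unipotent groups -/

structure GU (K : Type*) where
  a : K
  b : K
  c : K
  d : K
  e : K

@[ext] lemma GU.ext' {K : Type*} {x y : GU K} (h1 : x.a = y.a) (h2 : x.b = y.b)
    (h3 : x.c = y.c) (h4 : x.d = y.d) (h5 : x.e = y.e) : x = y := by
  cases x; cases y; simp_all

namespace GU
variable {K : Type*} [Field K]

instance : Mul (GU K) :=
  ⟨fun x y => ⟨x.a + y.a, x.b + y.b, x.c + y.c + x.a * y.e, x.d + y.d + x.b * y.e, x.e + y.e⟩⟩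
instance : One (GU K) := ⟨⟨0,0,0,0,0⟩⟩
instance : Inv (GU K) := ⟨fun x => ⟨-x.a, -x.b, -x.c + x.a * x.e, -x.d + x.b * x.e, -x.e⟩⟩

@[simp] lemma mul_a (x y : GU K) : (x * y).a = x.a + y.a := rfl
@[simp] lemma mul_b (x y : GU K) : (x * y).b = x.b + y.b := rfl
@[simp] lemma mul_c (x y : GU K) : (x * y).c = x.c + y.c + x.a * y.e := rfl
@[simp] lemma mul_d (x y : GU K) : (x * y).d = x.d + y.d + x.b * y.e := rfl
@[simp] lemma mul_e (x y : GU K) : (x * y).e = x.e + y.e := rfl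
@[simp] lemma one_a : (1 : GU K).a = 0 := rfl
@[simp] lemma one_b : (1 : GU K).b = 0 := rfl
@[simp] lemma one_c : (1 : GU K).c = 0 := rfl
@[simp] lemma one_d : (1 : GU K).d = 0 := rfl
@[simp] lemma one_e : (1 : GU K).e = 0 := rfl

instance : Group (GU K) where
  mul_assoc x y z := by ext <;> simp <;> ring
  one_mul x := by ext <;> simp
  mul_one x := by ext <;> simp
  inv_mul_cancel x := by
    ext <;> show _ = _ <;> simp [Inv.inv] <;> ring_nf

lemma commute_iff (x y : GU K) : Commute x y ↔
    x.a * y.e = y.a * x.e ∧ x.b * y.e = y.b * x.e := by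
  constructor
  · intro h
    have h1 := congrArg GU.c h
    have h2 := congrArg GU.d h
    simp only [mul_c, mul_d] at h1 h2
    constructor
    · linear_combination h1
    · linear_combination h2
  · rintro ⟨h1, h2⟩
    show x * y = y * x
    ext
    · simp; ring
    · simp; ring
    · simp; linear_combination h1
    · simp; linear_combination h2
    · simp; ring

def toProd : GU K ≃ K × K × K × K × K :=
  ⟨fun g => (g.a, g.b, g.c, g.d, g.e),
   fun p => ⟨p.1, p.2.1, p.2.2.1, p.2.2.2.1, p.2.2.2.2⟩,
   fun g => rfl, fun p => rfl⟩

end GU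

structure GV (K : Type*) where
  x : K
  y : K
  c : K
  d : K
  e : K

@[ext] lemma GV.ext' {K : Type*} {u v : GV K} (h1 : u.x = v.x) (h2 : u.y = v.y)
    (h3 : u.c = v.c) (h4 : u.d = v.d) (h5 : u.e = v.e) : u = v := by
  cases u; cases v; simp_all

namespace GV
variable {K : Type*} [Field K]

instance : Mul (GV K) :=
  ⟨fun u v => ⟨u.x + v.x, u.y + v.y, u.c + v.c + u.x * v.d + u.y * v.e, u.d + v.d, u.e + v.e⟩⟩
instance : One (GV K) := ⟨⟨0,0,0,0,0⟩⟩
instance : Inv (GV K) := ⟨fun u => ⟨-u.x, -u.y, -u.c + u.x * u.d + u.y * u.e, -u.d, -u.e⟩⟩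

@[simp] lemma mul_x (u v : GV K) : (u * v).x = u.x + v.x := rfl
@[simp] lemma mul_y (u v : GV K) : (u * v).y = u.y + v.y := rfl
@[simp] lemma mul_c (u v : GV K) : (u * v).c = u.c + v.c + u.x * v.d + u.y * v.e := rfl
@[simp] lemma mul_d (u v : GV K) : (u * v).d = u.d + v.d := rfl
@[simp] lemma mul_e (u v : GV K) : (u * v).e = u.e + v.e := rfl
@[simp] lemma one_x : (1 : GV K).x = 0 := rfl
@[simp] lemma one_y : (1 : GV K).y = 0 := rfl
@[simp] lemma one_c : (1 : GV K).c = 0 := rfl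
@[simp] lemma one_d : (1 : GV K).d = 0 := rfl
@[simp] lemma one_e : (1 : GV K).e = 0 := rfl

instance : Group (GV K) where
  mul_assoc u v w := by ext <;> simp <;> ring
  one_mul u := by ext <;> simp
  mul_one u := by ext <;> simp
  inv_mul_cancel u := by ext <;> show _ = _ <;> simp [Inv.inv] <;> ring_nf

lemma commute_iff (u v : GV K) : Commute u v ↔
    u.x * v.d + u.y * v.e = v.x * u.d + v.y * u.e := by
  constructor
  · intro h
    have h1 := congrArg GV.c h
    simp only [mul_c] at h1
    linear_combination h1
  · intro h1
    show u * v = v * u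
    ext
    · simp; ring
    · simp; ring
    · simp; linear_combination h1
    · simp; ring
    · simp; ring

def toProd : GV K ≃ K × K × K × K × K :=
  ⟨fun g => (g.x, g.y, g.c, g.d, g.e),
   fun p => ⟨p.1, p.2.1, p.2.2.1, p.2.2.2.1, p.2.2.2.2⟩,
   fun g => rfl, fun p => rfl⟩

end GV

/-! ### Membership characterization of the unipotent radicals -/

section Char
variable {K : Type*} [Field K]

lemma single_mem_coordSub {n m : ℕ} {j : Fin n} (hj : (j : ℕ) < m) :
    Pi.single j (1 : K) ∈ coordSub K n m := by
  intro j' hj'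
  have : j' ≠ j := by rintro rfl; omega
  simp [Pi.single_eq_of_ne this]

lemma mapsTo_iff {n : ℕ} (M : Matrix (Fin n) (Fin n) K) (m m' : ℕ) :
    (∀ v ∈ coordSub K n m, M.mulVec v ∈ coordSub K n m') ↔
      ∀ i j : Fin n, m' ≤ (i : ℕ) → (j : ℕ) < m → M i j = 0 := by
  constructor
  · intro h i j hi hj
    have := h (Pi.single j 1) (single_mem_coordSub hj) i hi
    simpa using this
  · intro h v hv i hi
    show (M.mulVec v) i = 0
    rw [Matrix.mulVec, dotProduct]
    apply Finset.sum_eq_zero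
    intro j _
    by_cases hj : (j : ℕ) < m
    · rw [h i j hi hj, zero_mul]
    · rw [hv j (by omega), mul_zero]

lemma mem_flagU_iff_U (g : GL (Fin 4) K) :
    g ∈ flagU K 4 3 dU234 dU234_zero dU234_mono ↔
      ∀ i j : Fin 4, ¬((i:ℕ) < 2 ∧ (j:ℕ) = 2) → ¬((i:ℕ) < 3 ∧ (j:ℕ) = 3) →
        ((g : Matrix (Fin 4) (Fin 4) K) - 1) i j = 0 := by
  have h1 : dU234 1 = 2 := rfl
  have h2 : dU234 2 = 3 := rfl
  have h3 : dU234 3 = 4 := rfl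
  have h0 : dU234 0 = 0 := rfl
  constructor
  · intro h i j hc1 hc2
    have k1 := (mapsTo_iff _ _ _).mp (h 1 le_rfl (by norm_num))
    have k2 := (mapsTo_iff _ _ _).mp (h 2 one_le_two (by norm_num))
    have k3 := (mapsTo_iff _ _ _).mp (h 3 (by norm_num) le_rfl)
    simp only [h0, h1, h2, h3] at k1 k2 k3
    have hi4 : (i : ℕ) < 4 := i.isLt
    have hj4 : (j : ℕ) < 4 := j.isLt
    rcases Nat.lt_or_ge (j : ℕ) 2 with hj | hj
    · exact k1 i j (Nat.zero_le _) hj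
    rcases Nat.lt_or_ge (j : ℕ) 3 with hj3 | hj3
    · exact k2 i j (by omega) hj3
    · exact k3 i j (by omega) (by omega)
  · intro h i hi1 hi3
    rw [mapsTo_iff]
    intro a b ha hb
    interval_cases i
    · simp only [h1, h0] at ha hb ⊢
      exact h a b (by omega) (by omega)
    · simp only [h2, h1] at ha hb ⊢
      exact h a b (by omega) (by omega)
    · simp only [h3, h2] at ha hb ⊢
      exact h a b (by omega) (by omega)

lemma mem_flagU_iff_V (g : GL (Fin 4) K) :
    g ∈ flagU K 4 3 dV134 dV134_zero dV134_mono ↔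
      ∀ i j : Fin 4, ¬((i:ℕ) = 0 ∧ 1 ≤ (j:ℕ)) → ¬((i:ℕ) < 3 ∧ (j:ℕ) = 3) →
        ((g : Matrix (Fin 4) (Fin 4) K) - 1) i j = 0 := by
  have h1 : dV134 1 = 1 := rfl
  have h2 : dV134 2 = 3 := rfl
  have h3 : dV134 3 = 4 := rfl
  have h0 : dV134 0 = 0 := rfl
  constructor
  · intro h i j hc1 hc2
    have k1 := (mapsTo_iff _ _ _).mp (h 1 le_rfl (by norm_num))
    have k2 := (mapsTo_iff _ _ _).mp (h 2 one_le_two (by norm_num))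
    have k3 := (mapsTo_iff _ _ _).mp (h 3 (by norm_num) le_rfl)
    simp only [h0, h1, h2, h3] at k1 k2 k3
    have hi4 : (i : ℕ) < 4 := i.isLt
    have hj4 : (j : ℕ) < 4 := j.isLt
    rcases Nat.lt_or_ge (j : ℕ) 1 with hj | hj
    · exact k1 i j (Nat.zero_le _) hj
    rcases Nat.lt_or_ge (j : ℕ) 3 with hj3 | hj3
    · exact k2 i j (by omega) hj3
    · exact k3 i j (by omega) (by omega)
  · intro h i hi1 hi3
    rw [mapsTo_iff]
    intro a b ha hb
    interval_cases i
    · simp only [h1, h0] at ha hb ⊢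
      exact h a b (by omega) (by omega)
    · simp only [h2, h1] at ha hb ⊢
      exact h a b (by omega) (by omega)
    · simp only [h3, h2] at ha hb ⊢
      exact h a b (by omega) (by omega)

end Char

/-! ### The homomorphisms into `GL (Fin 4) K` -/

section Hom
variable {K : Type*} [Field K]

def mU (a b c d e : K) : Matrix (Fin 4) (Fin 4) K :=
  !![1, 0, a, c; 0, 1, b, d; 0, 0, 1, e; 0, 0, 0, 1]

lemma mU_mul (a b c d e a' b' c' d' e' : K) :
    mU a b c d e * mU a' b' c' d' e' =
      mU (a + a') (b + b') (c + c' + a * e') (d + d' + b * e') (e + e') := by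
  ext i j
  fin_cases i <;> fin_cases j <;>
    simp [mU, Matrix.mul_apply, Fin.sum_univ_four, Matrix.vecHead, Matrix.vecTail] <;> ring

lemma mU_one : mU (0:K) 0 0 0 0 = 1 := by
  ext i j
  fin_cases i <;> fin_cases j <;>
    simp [mU, Matrix.one_apply, Matrix.vecHead, Matrix.vecTail]

lemma mU_inv (a b c d e : K) :
    mU a b c d e * mU (-a) (-b) (-c + a * e) (-d + b * e) (-e) = 1 := by
  rw [mU_mul, show a + -a = (0:K) by ring, show b + -b = (0:K) by ring,
    show c + (-c + a * e) + a * -e = (0:K) by ring,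
    show d + (-d + b * e) + b * -e = (0:K) by ring, show e + -e = (0:K) by ring, mU_one]

lemma mU_inv' (a b c d e : K) :
    mU (-a) (-b) (-c + a * e) (-d + b * e) (-e) * mU a b c d e = 1 := by
  rw [mU_mul, show -a + a = (0:K) by ring, show -b + b = (0:K) by ring,
    show -c + a * e + c + -a * e = (0:K) by ring,
    show -d + b * e + d + -b * e = (0:K) by ring, show -e + e = (0:K) by ring, mU_one]

def phiU : GU K →* GL (Fin 4) K where
  toFun g := ⟨mU g.a g.b g.c g.d g.e,
    mU (-g.a) (-g.b) (-g.c + g.a * g.e) (-g.d + g.b * g.e) (-g.e),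
    mU_inv _ _ _ _ _, mU_inv' _ _ _ _ _⟩
  map_one' := by
    apply Units.ext
    exact mU_one
  map_mul' x y := by
    apply Units.ext
    exact (mU_mul _ _ _ _ _ _ _ _ _ _).symm

lemma phiU_injective : Function.Injective (phiU (K := K)) := by
  intro x y h
  have h' : mU x.a x.b x.c x.d x.e = mU y.a y.b y.c y.d y.e := congrArg Units.val h
  ext
  · simpa [mU] using congrFun (congrFun h' 0) 2
  · simpa [mU] using congrFun (congrFun h' 1) 2
  · simpa [mU] using congrFun (congrFun h' 0) 3
  · simpa [mU] using congrFun (congrFun h' 1) 3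
  · simpa [mU] using congrFun (congrFun h' 2) 3

lemma phiU_range : (phiU (K := K)).range = flagU K 4 3 dU234 dU234_zero dU234_mono := by
  ext g
  rw [mem_flagU_iff_U]
  constructor
  · rintro ⟨x, rfl⟩ i j hc1 hc2
    fin_cases i <;> fin_cases j <;>
      simp_all [phiU, mU, Matrix.one_apply, Matrix.vecHead, Matrix.vecTail]
  · intro h
    refine ⟨⟨(g : Matrix (Fin 4) (Fin 4) K) 0 2, (g : Matrix (Fin 4) (Fin 4) K) 1 2,
      (g : Matrix (Fin 4) (Fin 4) K) 0 3, (g : Matrix (Fin 4) (Fin 4) K) 1 3,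
      (g : Matrix (Fin 4) (Fin 4) K) 2 3⟩, ?_⟩
    apply Units.ext
    show mU _ _ _ _ _ = (g : Matrix (Fin 4) (Fin 4) K)
    have key : ∀ i j : Fin 4, ¬((i:ℕ) < 2 ∧ (j:ℕ) = 2) → ¬((i:ℕ) < 3 ∧ (j:ℕ) = 3) →
        (g : Matrix (Fin 4) (Fin 4) K) i j = (1 : Matrix (Fin 4) (Fin 4) K) i j := by
      intro i j hc1 hc2
      have := h i j hc1 hc2
      rw [Matrix.sub_apply] at this
      linear_combination this
    ext i j
    fin_cases i <;> fin_cases j <;>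
      simp [mU, Matrix.vecHead, Matrix.vecTail] <;>
      first
        | rfl
        | (rw [key _ _ (by decide) (by decide)]; simp [Matrix.one_apply])

def mV (x y c d e : K) : Matrix (Fin 4) (Fin 4) K :=
  !![1, x, y, c; 0, 1, 0, d; 0, 0, 1, e; 0, 0, 0, 1]

lemma mV_mul (x y c d e x' y' c' d' e' : K) :
    mV x y c d e * mV x' y' c' d' e' =
      mV (x + x') (y + y') (c + c' + x * d' + y * e') (d + d') (e + e') := by
  ext i j
  fin_cases i <;> fin_cases j <;>
    simp [mV, Matrix.mul_apply, Fin.sum_univ_four, Matrix.vecHead, Matrix.vecTail] <;> ring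

lemma mV_one : mV (0:K) 0 0 0 0 = 1 := by
  ext i j
  fin_cases i <;> fin_cases j <;>
    simp [mV, Matrix.one_apply, Matrix.vecHead, Matrix.vecTail]

lemma mV_inv (x y c d e : K) :
    mV x y c d e * mV (-x) (-y) (-c + x * d + y * e) (-d) (-e) = 1 := by
  rw [mV_mul, show x + -x = (0:K) by ring, show y + -y = (0:K) by ring,
    show c + (-c + x * d + y * e) + x * -d + y * -e = (0:K) by ring,
    show d + -d = (0:K) by ring, show e + -e = (0:K) by ring, mV_one]

lemma mV_inv' (x y c d e : K) :
    mV (-x) (-y) (-c + x * d + y * e) (-d) (-e) * mV x y c d e = 1 := by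
  rw [mV_mul, show -x + x = (0:K) by ring, show -y + y = (0:K) by ring,
    show -c + x * d + y * e + c + -x * d + -y * e = (0:K) by ring,
    show -d + d = (0:K) by ring, show -e + e = (0:K) by ring, mV_one]

def phiV : GV K →* GL (Fin 4) K where
  toFun g := ⟨mV g.x g.y g.c g.d g.e,
    mV (-g.x) (-g.y) (-g.c + g.x * g.d + g.y * g.e) (-g.d) (-g.e),
    mV_inv _ _ _ _ _, mV_inv' _ _ _ _ _⟩
  map_one' := by
    apply Units.ext
    exact mV_one
  map_mul' x y := by
    apply Units.ext
    exact (mV_mul _ _ _ _ _ _ _ _ _ _).symm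

lemma phiV_injective : Function.Injective (phiV (K := K)) := by
  intro u v h
  have h' : mV u.x u.y u.c u.d u.e = mV v.x v.y v.c v.d v.e := congrArg Units.val h
  ext
  · simpa [mV] using congrFun (congrFun h' 0) 1
  · simpa [mV] using congrFun (congrFun h' 0) 2
  · simpa [mV] using congrFun (congrFun h' 0) 3
  · simpa [mV] using congrFun (congrFun h' 1) 3
  · simpa [mV] using congrFun (congrFun h' 2) 3

lemma phiV_range : (phiV (K := K)).range = flagU K 4 3 dV134 dV134_zero dV134_mono := by
  ext g
  rw [mem_flagU_iff_V]
  constructor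
  · rintro ⟨x, rfl⟩ i j hc1 hc2
    fin_cases i <;> fin_cases j <;>
      simp_all [phiV, mV, Matrix.one_apply, Matrix.vecHead, Matrix.vecTail]
  · intro h
    refine ⟨⟨(g : Matrix (Fin 4) (Fin 4) K) 0 1, (g : Matrix (Fin 4) (Fin 4) K) 0 2,
      (g : Matrix (Fin 4) (Fin 4) K) 0 3, (g : Matrix (Fin 4) (Fin 4) K) 1 3,
      (g : Matrix (Fin 4) (Fin 4) K) 2 3⟩, ?_⟩
    apply Units.ext
    show mV _ _ _ _ _ = (g : Matrix (Fin 4) (Fin 4) K)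
    have key : ∀ i j : Fin 4, ¬((i:ℕ) = 0 ∧ 1 ≤ (j:ℕ)) → ¬((i:ℕ) < 3 ∧ (j:ℕ) = 3) →
        (g : Matrix (Fin 4) (Fin 4) K) i j = (1 : Matrix (Fin 4) (Fin 4) K) i j := by
      intro i j hc1 hc2
      have := h i j hc1 hc2
      rw [Matrix.sub_apply] at this
      linear_combination this
    ext i j
    fin_cases i <;> fin_cases j <;>
      simp [mV, Matrix.vecHead, Matrix.vecTail] <;>
      first
        | rfl
        | (rw [key _ _ (by decide) (by decide)]; simp [Matrix.one_apply])

end Hom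

lemma sum_ite_point {α : Type*} [Fintype α] [DecidableEq α] (x0 : α) (c d : ℕ) :
    ∑ x : α, (if x = x0 then c else d) = c + (Fintype.card α - 1) * d := by
  rw [← Finset.add_sum_erase _ _ (Finset.mem_univ x0), if_pos rfl]
  congr 1
  rw [Finset.sum_congr rfl (fun x hx => if_neg (Finset.ne_of_mem_erase hx)),
    Finset.sum_const, Finset.card_erase_of_mem (Finset.mem_univ x0), Finset.card_univ,
    smul_eq_mul]

lemma card_ker_mul {A B : Type*} [CommGroup A] [CommGroup B] [Finite A] (f : A →* B)
    (hf : Function.Surjective f) :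
    Nat.card A = Nat.card B * Nat.card f.ker := by
  rw [Subgroup.card_eq_card_quotient_mul_card_subgroup f.ker]
  congr 1
  exact Nat.card_congr (QuotientGroup.quotientKerEquivOfSurjective f hf).toEquiv

lemma card_ker_add {A B : Type*} [AddCommGroup A] [AddCommGroup B] [Finite A] (f : A →+ B)
    (hf : Function.Surjective f) :
    Nat.card A = Nat.card B * Nat.card f.ker := by
  rw [AddSubgroup.card_eq_card_quotient_mul_card_addSubgroup f.ker]
  congr 1
  exact Nat.card_congr (QuotientAddGroup.quotientKerEquivOfSurjective f hf).toEquiv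

lemma nat_card_sigma {ι : Type*} [Fintype ι] (f : ι → Type*) [∀ i, Finite (f i)] :
    Nat.card (Σ i, f i) = ∑ i, Nat.card (f i) := by
  haveI : ∀ i, Fintype (f i) := fun i => Fintype.ofFinite (f i)
  simp only [Nat.card_eq_fintype_card]
  exact Fintype.card_sigma

section Linear
variable {K : Type*} [Field K] [Fintype K]

lemma card_linear4 (α β γ δ : K) (h : ¬(α = 0 ∧ β = 0 ∧ γ = 0 ∧ δ = 0)) :
    Nat.card {v : K × K × K × K //
      α * v.1 + β * v.2.1 + γ * v.2.2.1 + δ * v.2.2.2 = 0} = (Fintype.card K) ^ 3 := by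
  set f : (K × K × K × K) →+ K := AddMonoidHom.mk'
    (fun v => α * v.1 + β * v.2.1 + γ * v.2.2.1 + δ * v.2.2.2) (by intro v w; simp; ring) with hf
  have hsurj : Function.Surjective f := by
    intro t
    by_cases hα : α ≠ 0
    · exact ⟨(t / α, 0, 0, 0), by simp [hf]; field_simp⟩
    by_cases hβ : β ≠ 0
    · exact ⟨(0, t / β, 0, 0), by simp [hf]; field_simp⟩
    by_cases hγ : γ ≠ 0
    · exact ⟨(0, 0, t / γ, 0), by simp [hf]; field_simp⟩
    have hδ : δ ≠ 0 := by push_neg at hα hβ hγ; tauto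
    exact ⟨(0, 0, 0, t / δ), by simp [hf]; field_simp⟩
  have hcard := card_ker_add f hsurj
  have hker : Nat.card {v : K × K × K × K //
      α * v.1 + β * v.2.1 + γ * v.2.2.1 + δ * v.2.2.2 = 0} = Nat.card f.ker := by
    apply Nat.card_congr
    exact Equiv.subtypeEquivRight (fun v => by simp [hf, AddMonoidHom.mem_ker])
  rw [hker]
  have hdom : Nat.card (K × K × K × K) = (Fintype.card K) ^ 4 := by
    simp [Nat.card_eq_fintype_card]; ring
  have hK : Nat.card K = Fintype.card K := Nat.card_eq_fintype_card
  have hpos : 0 < Fintype.card K := Fintype.card_pos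
  rw [hdom, hK] at hcard
  have : Fintype.card K * Nat.card f.ker = Fintype.card K * (Fintype.card K) ^ 3 := by
    rw [← hcard]; ring
  exact Nat.eq_of_mul_eq_mul_left hpos this

end Linear

section Wcounts
variable {K : Type*} [Field K] [Fintype K]

local notation "q" => Fintype.card K

/-- fiber for U-case, e ≠ 0 -/
lemma fiberU_ne (a b e : K) (he : e ≠ 0) :
    Nat.card {u' : K × K × K // a * u'.2.2 = u'.1 * e ∧ b * u'.2.2 = u'.2.1 * e} = q := by
  set g : (K × K × K) →+ (K × K) := AddMonoidHom.mk'
    (fun u' => (a * u'.2.2 - u'.1 * e, b * u'.2.2 - u'.2.1 * e))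
    (by intro v w; simp [Prod.ext_iff]; constructor <;> ring) with hg
  have hsurj : Function.Surjective g := by
    rintro ⟨s, t⟩
    exact ⟨(-s / e, -t / e, 0), by simp [hg, Prod.ext_iff]; constructor <;> field_simp⟩
  have hcard := card_ker_add g hsurj
  have hker : Nat.card {u' : K × K × K // a * u'.2.2 = u'.1 * e ∧ b * u'.2.2 = u'.2.1 * e}
      = Nat.card g.ker := by
    apply Nat.card_congr
    apply Equiv.subtypeEquivRight
    intro v
    simp [hg, AddMonoidHom.mem_ker, Prod.ext_iff, sub_eq_zero]
  rw [hker]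
  have hdom : Nat.card (K × K × K) = q ^ 3 := by simp [Nat.card_eq_fintype_card]; ring
  have hcod : Nat.card (K × K) = q ^ 2 := by simp [Nat.card_eq_fintype_card]; ring
  rw [hdom, hcod] at hcard
  have hpos : 0 < q ^ 2 := pow_pos Fintype.card_pos 2
  have : q ^ 2 * Nat.card g.ker = q ^ 2 * q := by rw [← hcard]; ring
  exact Nat.eq_of_mul_eq_mul_left hpos this

/-- fiber for U-case, e = 0, (a,b) ≠ 0 -/
lemma fiberU_zero (a b : K) (hab : ¬(a = 0 ∧ b = 0)) :
    Nat.card {u' : K × K × K // a * u'.2.2 = u'.1 * 0 ∧ b * u'.2.2 = u'.2.1 * 0} = q ^ 2 := by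
  have : {u' : K × K × K // a * u'.2.2 = u'.1 * 0 ∧ b * u'.2.2 = u'.2.1 * 0} ≃ (K × K) := by
    refine ⟨fun s => (s.1.1, s.1.2.1), fun p => ⟨(p.1, p.2, 0), by simp⟩, ?_, ?_⟩
    · rintro ⟨⟨a', b', e'⟩, h1, h2⟩
      have he' : e' = 0 := by
        rcases not_and_or.mp hab with ha | hb
        · have := h1; simp at this; tauto
        · have := h2; simp at this; tauto
      subst he'
      rfl
    · intro p
      rfl
  rw [Nat.card_congr this]
  simp [Nat.card_eq_fintype_card]; ring

lemma fiberU_all :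
    Nat.card {u' : K × K × K // (0:K) * u'.2.2 = u'.1 * 0 ∧ (0:K) * u'.2.2 = u'.2.1 * 0}
      = q ^ 3 := by
  have : {u' : K × K × K // (0:K) * u'.2.2 = u'.1 * 0 ∧ (0:K) * u'.2.2 = u'.2.1 * 0}
      ≃ (K × K × K) := Equiv.subtypeUnivEquiv (by intro x; simp)
  rw [Nat.card_congr this]
  simp [Nat.card_eq_fintype_card]; ring

lemma cardWU :
    Nat.card {w : (K × K × K) × (K × K × K) //
        w.1.1 * w.2.2.2 = w.2.1 * w.1.2.2 ∧ w.1.2.1 * w.2.2.2 = w.2.2.1 * w.1.2.2}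
      = q^3 + (q^2 - 1) * q^2 + q^2 * ((q - 1) * q) := by
  classical
  rw [Nat.card_congr (Equiv.subtypeProdEquivSigmaSubtype
    (fun (u u' : K × K × K) => u.1 * u'.2.2 = u'.1 * u.2.2 ∧ u.2.1 * u'.2.2 = u'.2.1 * u.2.2))]
  rw [nat_card_sigma]
  have key : ∀ u : K × K × K,
      Nat.card {u' : K × K × K // u.1 * u'.2.2 = u'.1 * u.2.2 ∧ u.2.1 * u'.2.2 = u'.2.1 * u.2.2}
      = (if u.2.2 = 0 then (if (u.1, u.2.1) = ((0:K), (0:K)) then q^3 else q^2) else q) := by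
    rintro ⟨a, b, e⟩
    by_cases he : e = 0
    · subst he
      simp only [if_pos rfl]
      by_cases hab : (a, b) = ((0:K), (0:K))
      · rw [if_pos hab]
        obtain ⟨rfl, rfl⟩ : a = 0 ∧ b = 0 := by simpa [Prod.ext_iff] using hab
        exact fiberU_all
      · rw [if_neg hab]
        exact fiberU_zero a b (by simpa [Prod.ext_iff] using hab)
    · rw [if_neg he]
      exact fiberU_ne a b e he
  rw [Finset.sum_congr rfl (fun u _ => key u)]
  rw [Fintype.sum_prod_type]
  have inner : ∀ a : K, ∀ bc : K × K,
      (if bc.2 = 0 then (if (a, bc.1) = ((0:K), (0:K)) then q^3 else q^2) else q)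
        = (if bc.2 = 0 then (if (a, bc.1) = ((0:K), (0:K)) then q^3 else q^2) else q) := fun _ _ => rfl
  -- sum over bc : K × K for fixed a
  have hsum1 : ∀ a : K, ∑ bc : K × K,
      (if bc.2 = 0 then (if (a, bc.1) = ((0:K), (0:K)) then q^3 else q^2) else q)
      = (∑ b : K, (if (a, b) = ((0:K), (0:K)) then q^3 else q^2)) + q * ((q - 1) * q) := by
    intro a
    rw [Fintype.sum_prod_type]
    have : ∀ b : K, ∑ e : K,
        (if e = 0 then (if (a, b) = ((0:K), (0:K)) then q^3 else q^2) else q)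
        = (if (a, b) = ((0:K), (0:K)) then q^3 else q^2) + (q - 1) * q := by
      intro b
      exact sum_ite_point 0 _ q
    rw [Finset.sum_congr rfl (fun b _ => this b), Finset.sum_add_distrib,
      Finset.sum_const, Finset.card_univ, smul_eq_mul]
  rw [Finset.sum_congr rfl (fun a _ => hsum1 a), Finset.sum_add_distrib,
    Finset.sum_const, Finset.card_univ, smul_eq_mul]
  have h2 : ∑ a : K, ∑ b : K, (if (a, b) = ((0:K), (0:K)) then q^3 else q^2)
      = q^3 + (q^2 - 1) * q^2 := by
    have step : ∀ a b : K, (if (a, b) = ((0:K), (0:K)) then q^3 else q^2)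
        = (if a = 0 then (if b = 0 then q^3 else q^2) else q^2) := by
      intro a b
      by_cases ha : a = 0 <;> by_cases hb : b = 0 <;> simp [ha, hb, Prod.ext_iff]
    simp only [step]
    have inner2 : ∀ a : K, (∑ b : K, (if a = 0 then (if b = 0 then q^3 else q^2) else q^2))
        = (if a = 0 then q^3 + (q - 1) * q^2 else q * q^2) := by
      intro a
      by_cases ha : a = 0
      · simp only [ha, if_pos rfl]
        exact sum_ite_point 0 _ _
      · simp [ha, Finset.sum_const, Finset.card_univ, mul_comm]
    rw [Finset.sum_congr rfl (fun a _ => inner2 a), sum_ite_point 0 _ _]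
    have hq : 0 < q := Fintype.card_pos
    obtain ⟨r, hr⟩ : ∃ r, q = r + 1 := ⟨q - 1, by omega⟩
    rw [hr]
    have e1 : (r + 1) - 1 = r := by omega
    have e2 : (r + 1)^2 - 1 = r * (r + 1) + r := by
      have : (r + 1)^2 = r * (r + 1) + r + 1 := by ring
      omega
    rw [e1, e2]
    ring
  rw [h2]
  ring

lemma cardWV :
    Nat.card {w : (K × K × K × K) × (K × K × K × K) //
        w.1.1 * w.2.2.2.1 + w.1.2.1 * w.2.2.2.2 = w.2.1 * w.1.2.2.1 + w.2.2.1 * w.1.2.2.2}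
      = q^4 + (q^4 - 1) * q^3 := by
  classical
  rw [Nat.card_congr (Equiv.subtypeProdEquivSigmaSubtype
    (fun (u u' : K × K × K × K) =>
      u.1 * u'.2.2.1 + u.2.1 * u'.2.2.2 = u'.1 * u.2.2.1 + u'.2.1 * u.2.2.2))]
  rw [nat_card_sigma]
  have key : ∀ u : K × K × K × K,
      Nat.card {u' : K × K × K × K //
        u.1 * u'.2.2.1 + u.2.1 * u'.2.2.2 = u'.1 * u.2.2.1 + u'.2.1 * u.2.2.2}
      = (if u = (0, 0, 0, 0) then q^4 else q^3) := by
    rintro ⟨x, y, d, e⟩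
    by_cases hu : (x, y, d, e) = ((0:K), (0:K), (0:K), (0:K))
    · rw [if_pos hu]
      obtain ⟨rfl, rfl, rfl, rfl⟩ : x = 0 ∧ y = 0 ∧ d = 0 ∧ e = 0 := by
        simpa [Prod.ext_iff] using hu
      have : {u' : K × K × K × K //
          (0:K) * u'.2.2.1 + (0:K) * u'.2.2.2 = u'.1 * 0 + u'.2.1 * 0}
          ≃ (K × K × K × K) := Equiv.subtypeUnivEquiv (by intro v; simp)
      rw [Nat.card_congr this]
      simp [Nat.card_eq_fintype_card]; ring
    · rw [if_neg hu]
      have hcond : ¬(-d = 0 ∧ -e = 0 ∧ x = 0 ∧ y = 0) := by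
        simp only [Prod.ext_iff] at hu
        intro hc
        apply hu
        exact ⟨hc.2.2.1, hc.2.2.2, neg_eq_zero.mp hc.1, neg_eq_zero.mp hc.2.1⟩
      have := card_linear4 (-d) (-e) x y hcond
      rw [← this]
      apply Nat.card_congr
      apply Equiv.subtypeEquivRight
      intro v
      constructor
      · intro h; linear_combination h
      · intro h; linear_combination h
  rw [Finset.sum_congr rfl (fun u _ => key u)]
  rw [sum_ite_point ((0:K), (0:K), (0:K), (0:K)) (q^4) (q^3)]
  have hc4 : Fintype.card (K × K × K × K) = q^4 := by
    simp [Fintype.card_prod]; ring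
  rw [hc4]

end Wcounts

/-! ### Transfer of conjugacy classes and final assembly -/

lemma conjClasses_card_congr {G H : Type*} [Group G] [Group H] (e : G ≃* H) :
    Nat.card (ConjClasses G) = Nat.card (ConjClasses H) := by
  apply Nat.card_congr
  refine ⟨ConjClasses.map e.toMonoidHom, ConjClasses.map e.symm.toMonoidHom, ?_, ?_⟩
  · intro x
    obtain ⟨a, rfl⟩ := ConjClasses.exists_rep x
    show ConjClasses.mk (e.symm (e a)) = ConjClasses.mk a
    rw [MulEquiv.symm_apply_apply]
  · intro x
    obtain ⟨a, rfl⟩ := ConjClasses.exists_rep x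
    show ConjClasses.mk (e (e.symm a)) = ConjClasses.mk a
    rw [MulEquiv.apply_symm_apply]

section Final
variable {K : Type*} [Field K]

def cuEquiv : {p : GU K × GU K // Commute p.1 p.2} ≃
    ({w : (K × K × K) × (K × K × K) //
        w.1.1 * w.2.2.2 = w.2.1 * w.1.2.2 ∧ w.1.2.1 * w.2.2.2 = w.2.2.1 * w.1.2.2}
      × (K × K × K × K)) where
  toFun s := (⟨((s.1.1.a, s.1.1.b, s.1.1.e), (s.1.2.a, s.1.2.b, s.1.2.e)),
    (GU.commute_iff _ _).mp s.2⟩, (s.1.1.c, s.1.1.d, s.1.2.c, s.1.2.d))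
  invFun t := ⟨(⟨t.1.1.1.1, t.1.1.1.2.1, t.2.1, t.2.2.1, t.1.1.1.2.2⟩,
    ⟨t.1.1.2.1, t.1.1.2.2.1, t.2.2.2.1, t.2.2.2.2, t.1.1.2.2.2⟩),
    (GU.commute_iff _ _).mpr t.1.2⟩
  left_inv s := rfl
  right_inv t := rfl

def cvEquiv : {p : GV K × GV K // Commute p.1 p.2} ≃
    ({w : (K × K × K × K) × (K × K × K × K) //
        w.1.1 * w.2.2.2.1 + w.1.2.1 * w.2.2.2.2 = w.2.1 * w.1.2.2.1 + w.2.2.1 * w.1.2.2.2}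
      × (K × K)) where
  toFun s := (⟨((s.1.1.x, s.1.1.y, s.1.1.d, s.1.1.e), (s.1.2.x, s.1.2.y, s.1.2.d, s.1.2.e)),
    (GV.commute_iff _ _).mp s.2⟩, (s.1.1.c, s.1.2.c))
  invFun t := ⟨(⟨t.1.1.1.1, t.1.1.1.2.1, t.2.1, t.1.1.1.2.2.1, t.1.1.1.2.2.2⟩,
    ⟨t.1.1.2.1, t.1.1.2.2.1, t.2.2, t.1.1.2.2.2.1, t.1.1.2.2.2.2⟩),
    (GV.commute_iff _ _).mpr t.1.2⟩
  left_inv s := rfl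
  right_inv t := rfl

end Final

/-- The unipotent radicals `U` and `V` of the stabilizers of the flags
`0 ⊆ F_q^2 ⊆ F_q^3 ⊆ F_q^4` and `0 ⊆ F_q^1 ⊆ F_q^3 ⊆ F_q^4` (two associated parabolic
subgroups) both have order `q^5`, yet `U` has strictly fewer conjugacy classes than `V`;
in particular `k(U) ≠ k(V)`. -/
theorem stmt13 (q : ℕ) (hq : ∃ p k : ℕ, p.Prime ∧ 1 ≤ k ∧ q = p ^ k)
    (K : Type u) [Field K] [Fintype K] (hcard : Fintype.card K = q) :
    Nat.card ↥(flagU K 4 3 dU234 dU234_zero dU234_mono) = q ^ 5 ∧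
    Nat.card ↥(flagU K 4 3 dV134 dV134_zero dV134_mono) = q ^ 5 ∧
    Nat.card (ConjClasses ↥(flagU K 4 3 dU234 dU234_zero dU234_mono))
      < Nat.card (ConjClasses ↥(flagU K 4 3 dV134 dV134_zero dV134_mono)) ∧
    Nat.card (ConjClasses ↥(flagU K 4 3 dU234 dU234_zero dU234_mono))
      ≠ Nat.card (ConjClasses ↥(flagU K 4 3 dV134 dV134_zero dV134_mono)) := by
  classical
  -- q ≥ 2
  have hq2 : 2 ≤ q := by
    obtain ⟨p, k, hp, hk, rfl⟩ := hq
    calc 2 ≤ p := hp.two_le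
    _ ≤ p ^ k := Nat.le_self_pow (by omega) p
  -- equivalences with the explicit groups
  haveI : Finite (GU K) := Finite.of_equiv _ (GU.toProd (K := K)).symm
  haveI : Finite (GV K) := Finite.of_equiv _ (GV.toProd (K := K)).symm
  have eU : GU K ≃* ↥(flagU K 4 3 dU234 dU234_zero dU234_mono) :=
    (MonoidHom.ofInjective phiU_injective).trans (MulEquiv.subgroupCongr phiU_range)
  have eV : GV K ≃* ↥(flagU K 4 3 dV134 dV134_zero dV134_mono) :=
    (MonoidHom.ofInjective phiV_injective).trans (MulEquiv.subgroupCongr phiV_range)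
  -- cardinalities
  have cardK : Nat.card K = q := by rw [Nat.card_eq_fintype_card, hcard]
  have cardGU : Nat.card (GU K) = q ^ 5 := by
    rw [Nat.card_congr (GU.toProd (K := K))]
    simp [Nat.card_eq_fintype_card, hcard]
    ring
  have cardGV : Nat.card (GV K) = q ^ 5 := by
    rw [Nat.card_congr (GV.toProd (K := K))]
    simp [Nat.card_eq_fintype_card, hcard]
    ring
  have c1 : Nat.card ↥(flagU K 4 3 dU234 dU234_zero dU234_mono) = q ^ 5 := by
    rw [← Nat.card_congr eU.toEquiv, cardGU]
  have c2 : Nat.card ↥(flagU K 4 3 dV134 dV134_zero dV134_mono) = q ^ 5 := by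
    rw [← Nat.card_congr eV.toEquiv, cardGV]
  -- conjugacy class counts via commuting pairs
  have kUeq : Nat.card (ConjClasses ↥(flagU K 4 3 dU234 dU234_zero dU234_mono))
      = Nat.card (ConjClasses (GU K)) := (conjClasses_card_congr eU).symm
  have kVeq : Nat.card (ConjClasses ↥(flagU K 4 3 dV134 dV134_zero dV134_mono))
      = Nat.card (ConjClasses (GV K)) := (conjClasses_card_congr eV).symm
  have commU := card_comm_eq_card_conjClasses_mul_card (GU K)
  have commV := card_comm_eq_card_conjClasses_mul_card (GV K)
  rw [cardGU] at commU
  rw [cardGV] at commV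
  have cu : Nat.card {p : GU K × GU K // Commute p.1 p.2}
      = (q^3 + (q^2 - 1) * q^2 + q^2 * ((q - 1) * q)) * q^4 := by
    rw [Nat.card_congr (cuEquiv (K := K)), Nat.card_prod, cardWU]
    congr 1
    · rw [hcard]
    · simp [Nat.card_eq_fintype_card, hcard]; ring
  have cv : Nat.card {p : GV K × GV K // Commute p.1 p.2}
      = (q^4 + (q^4 - 1) * q^3) * q^2 := by
    rw [Nat.card_congr (cvEquiv (K := K)), Nat.card_prod, cardWV]
    congr 1
    · rw [hcard]
    · simp [Nat.card_eq_fintype_card, hcard]; ring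
  rw [cu] at commU
  rw [cv] at commV
  -- the numeric inequality
  have hlt : (q^3 + (q^2 - 1) * q^2 + q^2 * ((q - 1) * q)) * q^4
      < (q^4 + (q^4 - 1) * q^3) * q^2 := by
    obtain ⟨r, rfl⟩ : ∃ r, q = r + 2 := ⟨q - 2, by omega⟩
    have e1 : (r + 2) - 1 = r + 1 := by omega
    have e2 : (r + 2)^2 - 1 = r^2 + 4*r + 3 := by
      have : (r + 2)^2 = r^2 + 4*r + 4 := by ring
      omega
    have e4 : (r + 2)^4 - 1 = r^4 + 8*r^3 + 24*r^2 + 32*r + 15 := by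
      have : (r + 2)^4 = r^4 + 8*r^3 + 24*r^2 + 32*r + 16 := by ring
      omega
    rw [e1, e2, e4]
    calc (( r + 2)^3 + (r^2 + 4*r + 3) * (r + 2)^2 + (r + 2)^2 * ((r + 1) * (r + 2))) * (r + 2)^4
        < ((r + 2)^3 + (r^2 + 4*r + 3) * (r + 2)^2 + (r + 2)^2 * ((r + 1) * (r + 2))) * (r + 2)^4
          + (r + 2)^5 * (r + 1)^3 * (r + 3) := Nat.lt_add_of_pos_right (by positivity)
      _ = ((r + 2)^4 + (r^4 + 8*r^3 + 24*r^2 + 32*r + 15) * (r + 2)^3) * (r + 2)^2 := by ring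
  have hmul : Nat.card (ConjClasses (GU K)) * q^5 < Nat.card (ConjClasses (GV K)) * q^5 := by
    rw [← commU, ← commV]; exact hlt
  have klt : Nat.card (ConjClasses (GU K)) < Nat.card (ConjClasses (GV K)) :=
    Nat.lt_of_mul_lt_mul_right hmul
  rw [kUeq, kVeq]
  exact ⟨c1, c2, klt, Nat.ne_of_lt klt⟩
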